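/- arXiv:2512.17307 — 5 statements merged into one kernel-verified Lean document; each statement's English description precedes it below -/
import Mathlib

section
/- For every d ≥ 1, every d×d complex density matrix ρ, and all Hermitian d×d complex matrices X and Y, the information-refined uncertainty relation U(ρ,X)·U(ρ,Y) ≥ (1/4)·|tr(ρ·[X,Y])|² holds, where [X,Y] = XY − YX. -/
open Matrix
open scoped ComplexOrder

/-- The positive semidefinite square root, as `Matrix.PosSemidef.sqrt` was defined in the older Mathlib. -/
noncomputable def Matrix.PosSemidef.sqrt {n 𝕜 : Type*} [Fintype n] [DecidableEq n] [RCLike 𝕜]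
    {A : Matrix n n 𝕜} (hA : A.PosSemidef) : Matrix n n 𝕜 :=
  hA.1.eigenvectorUnitary.1 * diagonal ((↑) ∘ (√·) ∘ hA.1.eigenvalues) *
    (star hA.1.eigenvectorUnitary : Matrix n n 𝕜)

/-- Variance `V(ρ,X) = tr(ρX²) − (tr(ρX))²` (as a real number). -/
noncomputable def Vq {d : ℕ} (ρ X : Matrix (Fin d) (Fin d) ℂ) : ℝ :=
  (Matrix.trace (ρ * X ^ 2)).re - ((Matrix.trace (ρ * X)).re) ^ 2

/-- The centered observable `X₀ = X − tr(ρX)·1`. -/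
noncomputable def Xc {d : ℕ} (ρ X : Matrix (Fin d) (Fin d) ℂ) : Matrix (Fin d) (Fin d) ℂ :=
  X - Matrix.trace (ρ * X) • (1 : Matrix (Fin d) (Fin d) ℂ)

/-- Wigner–Yanase skew information `I(ρ,X) = tr(ρX²) − tr(√ρ X √ρ X)`. -/
noncomputable def Iq {d : ℕ} {ρ : Matrix (Fin d) (Fin d) ℂ} (hρ : ρ.PosSemidef)
    (X : Matrix (Fin d) (Fin d) ℂ) : ℝ :=
  (Matrix.trace (ρ * X ^ 2)).re - (Matrix.trace (hρ.sqrt * X * hρ.sqrt * X)).re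

/-- Classical uncertainty `C(ρ,X) = tr(√ρ X₀ √ρ X₀)`. -/
noncomputable def Cq {d : ℕ} {ρ : Matrix (Fin d) (Fin d) ℂ} (hρ : ρ.PosSemidef)
    (X : Matrix (Fin d) (Fin d) ℂ) : ℝ :=
  (Matrix.trace (hρ.sqrt * Xc ρ X * hρ.sqrt * Xc ρ X)).re

/-- `J(ρ,X) = (1/2)·tr(({√ρ, X₀})²)`. -/
noncomputable def Jq {d : ℕ} {ρ : Matrix (Fin d) (Fin d) ℂ} (hρ : ρ.PosSemidef)
    (X : Matrix (Fin d) (Fin d) ℂ) : ℝ :=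
  (1 / 2) * (Matrix.trace ((hρ.sqrt * Xc ρ X + Xc ρ X * hρ.sqrt) ^ 2)).re

/-- Quantum uncertainty `U(ρ,X) = √(I(ρ,X)·J(ρ,X))`. -/
noncomputable def Uq {d : ℕ} {ρ : Matrix (Fin d) (Fin d) ℂ} (hρ : ρ.PosSemidef)
    (X : Matrix (Fin d) (Fin d) ℂ) : ℝ :=
  Real.sqrt (Iq hρ X * Jq hρ X)

/-!
Write `R = √ρ`. Twice the skew information `I(ρ,X)` is the squared Hilbert–Schmidt norm of the
commutator `[R, X]`, twice `J(ρ,Y)` that of the anticommutator `{R, Y₀}`, and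
`tr([R, X] {R, Y₀}) = tr(ρ [X, Y])` (the centering drops out of the commutator). Cauchy–Schwarz
for the Hilbert–Schmidt inner product therefore gives `|tr(ρ[X,Y])|² ≤ 4 I(ρ,X) J(ρ,Y)`.
Multiplying this by the same bound with `X` and `Y` exchanged and taking square roots gives
`U(ρ,X) U(ρ,Y) ≥ |tr(ρ[X,Y])|² / 4`.
-/

namespace Matrix
variable {n 𝕜 : Type*} [Fintype n] [RCLike 𝕜]

theorem PosSemidef.sqrt_eq_cfc [DecidableEq n] {A : Matrix n n 𝕜} (hA : A.PosSemidef) :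
    hA.sqrt = cfc Real.sqrt A := by
  rw [hA.1.cfc_eq]; rfl

theorem PosSemidef.isHermitian_sqrt [DecidableEq n] {A : Matrix n n 𝕜} (hA : A.PosSemidef) :
    hA.sqrt.IsHermitian := by
  rw [hA.sqrt_eq_cfc]; exact cfc_predicate _ _

theorem PosSemidef.sqrt_mul_self [DecidableEq n] {A : Matrix n n 𝕜} (hA : A.PosSemidef) :
    hA.sqrt * hA.sqrt = A := by
  rw [hA.sqrt_eq_cfc, ← cfc_mul .., cfc_congr (g := id), cfc_id ℝ A hA.1.isSelfAdjoint]
  rw [hA.1.spectrum_real_eq_range_eigenvalues]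
  rintro _ ⟨i, rfl⟩
  exact Real.mul_self_sqrt (hA.eigenvalues_nonneg i)

theorem norm_trace_conjTranspose_mul_sq_le [DecidableEq n] (A B : Matrix n n 𝕜) :
    ‖trace (Aᴴ * B)‖ ^ 2 ≤ RCLike.re (trace (Aᴴ * A)) * RCLike.re (trace (Bᴴ * B)) := by
  -- Cauchy–Schwarz for the Hilbert–Schmidt inner product `⟪x, y⟫ = tr (y * 1 * xᴴ)`
  let _ := (1 : Matrix n n 𝕜).toMatrixSeminormedAddCommGroup PosSemidef.one
  let _ := (1 : Matrix n n 𝕜).toMatrixInnerProductSpace PosSemidef.one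
  have := inner_mul_inner_self_le (𝕜 := 𝕜) Bᴴ Aᴴ
  change ‖trace (Aᴴ * 1 * Bᴴᴴ)‖ * ‖trace (Bᴴ * 1 * Aᴴᴴ)‖ ≤
    RCLike.re (trace (Bᴴ * 1 * Bᴴᴴ)) * RCLike.re (trace (Aᴴ * 1 * Aᴴᴴ)) at this
  have hBA : trace (Bᴴ * A) = star (trace (Aᴴ * B)) := by
    rw [← trace_conjTranspose, conjTranspose_mul, conjTranspose_conjTranspose]
  simpa only [conjTranspose_conjTranspose, mul_one, hBA, norm_star, ← sq,
    mul_comm (RCLike.re (trace (Bᴴ * B)))] using this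

theorem conjTranspose_commutator {R Z : Matrix n n 𝕜} (hR : R.IsHermitian) (hZ : Z.IsHermitian) :
    (R * Z - Z * R)ᴴ = -(R * Z - Z * R) := by
  rw [conjTranspose_sub, conjTranspose_mul, conjTranspose_mul, hZ.eq, hR.eq, neg_sub]

theorem conjTranspose_anticommutator {R Z : Matrix n n 𝕜} (hR : R.IsHermitian)
    (hZ : Z.IsHermitian) : (R * Z + Z * R)ᴴ = R * Z + Z * R := by
  rw [conjTranspose_add, conjTranspose_mul, conjTranspose_mul, hZ.eq, hR.eq, add_comm]

theorem trace_mul_mul_mul_cycle {α : Type*} [CommSemiring α] (A B C D : Matrix n n α) :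
    trace (A * B * C * D) = trace (D * A * B * C) := by
  rw [trace_mul_comm _ D, ← mul_assoc, ← mul_assoc]

theorem trace_commutator_mul_anticommutator {α : Type*} [CommRing α] (S Z W : Matrix n n α) :
    trace ((S * Z - Z * S) * (S * W + W * S)) = trace (S * S * (Z * W - W * Z)) := by
  have expand : (S * Z - Z * S) * (S * W + W * S) =
      S * Z * S * W + S * Z * W * S - Z * S * S * W - Z * S * W * S := by noncomm_ring
  rw [expand, trace_sub, trace_sub, trace_add, mul_sub, trace_sub,
    trace_mul_mul_mul_cycle S Z W S, trace_mul_mul_mul_cycle Z S W S,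
    ← trace_mul_mul_mul_cycle S S W Z]
  simp only [mul_assoc]
  ring

theorem trace_conjTranspose_commutator_mul_self {R Z : Matrix n n 𝕜} (hR : R.IsHermitian)
    (hZ : Z.IsHermitian) :
    trace ((R * Z - Z * R)ᴴ * (R * Z - Z * R)) =
      2 * trace (R * R * (Z * Z)) - 2 * trace (R * Z * R * Z) := by
  have expand : -(R * Z - Z * R) * (R * Z - Z * R) =
      Z * R * R * Z - Z * R * Z * R - R * Z * R * Z + R * Z * Z * R := by noncomm_ring
  rw [conjTranspose_commutator hR hZ, expand, trace_add, trace_sub, trace_sub,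
    trace_mul_mul_mul_cycle Z R Z R, trace_mul_mul_mul_cycle R Z Z R,
    ← trace_mul_mul_mul_cycle R R Z Z]
  simp only [mul_assoc]
  ring

theorem re_trace_conjTranspose_mul_self_nonneg (A : Matrix n n 𝕜) :
    0 ≤ RCLike.re (trace (Aᴴ * A)) :=
  (RCLike.nonneg_iff.mp (posSemidef_conjTranspose_mul_self A).trace_nonneg).1

theorem norm_trace_mul_commutator_sq_le [DecidableEq n] {R Z : Matrix n n 𝕜}
    (hR : R.IsHermitian) (hZ : Z.IsHermitian) (W : Matrix n n 𝕜) :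
    ‖trace (R * R * (Z * W - W * Z))‖ ^ 2 ≤
      RCLike.re (trace ((R * Z - Z * R)ᴴ * (R * Z - Z * R))) *
        RCLike.re (trace ((R * W + W * R)ᴴ * (R * W + W * R))) := by
  rw [← trace_commutator_mul_anticommutator, ← norm_neg, ← trace_neg, ← neg_mul,
    ← conjTranspose_commutator hR hZ]
  exact norm_trace_conjTranspose_mul_sq_le _ _

theorem IsHermitian.star_trace_mul {A B : Matrix n n 𝕜} (hA : A.IsHermitian)
    (hB : B.IsHermitian) : star (trace (A * B)) = trace (A * B) := by
  rw [← trace_conjTranspose, conjTranspose_mul, hA.eq, hB.eq, trace_mul_comm]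

end Matrix

section UncertaintyQuantities

variable {d : ℕ} {ρ : Matrix (Fin d) (Fin d) ℂ}

theorem isHermitian_Xc (hρ : ρ.IsHermitian) {X : Matrix (Fin d) (Fin d) ℂ}
    (hX : X.IsHermitian) : (Xc ρ X).IsHermitian := by
  simp [IsHermitian, Xc, conjTranspose_smul, hX.eq, hρ.star_trace_mul hX]

theorem commutator_Xc (Z W : Matrix (Fin d) (Fin d) ℂ) :
    Z * Xc ρ W - Xc ρ W * Z = Z * W - W * Z := by
  simp only [Xc, mul_sub, sub_mul, Matrix.mul_smul, Matrix.smul_mul, mul_one, one_mul]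
  abel

theorem two_mul_Iq (hρ : ρ.PosSemidef) {X : Matrix (Fin d) (Fin d) ℂ} (hX : X.IsHermitian) :
    2 * Iq hρ X =
      (trace ((hρ.sqrt * X - X * hρ.sqrt)ᴴ * (hρ.sqrt * X - X * hρ.sqrt))).re := by
  rw [trace_conjTranspose_commutator_mul_self hρ.isHermitian_sqrt hX, hρ.sqrt_mul_self, ← sq,
    Iq]
  simp only [Complex.sub_re, Complex.mul_re, Complex.re_ofNat, Complex.im_ofNat, zero_mul,
    sub_zero]
  ring

theorem two_mul_Jq (hρ : ρ.PosSemidef) {X : Matrix (Fin d) (Fin d) ℂ} (hX : X.IsHermitian) :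
    2 * Jq hρ X = (trace ((hρ.sqrt * Xc ρ X + Xc ρ X * hρ.sqrt)ᴴ *
      (hρ.sqrt * Xc ρ X + Xc ρ X * hρ.sqrt))).re := by
  rw [conjTranspose_anticommutator hρ.isHermitian_sqrt (isHermitian_Xc hρ.1 hX), ← sq, Jq]
  ring

theorem Iq_nonneg (hρ : ρ.PosSemidef) {X : Matrix (Fin d) (Fin d) ℂ} (hX : X.IsHermitian) :
    0 ≤ Iq hρ X := by
  have h := re_trace_conjTranspose_mul_self_nonneg (hρ.sqrt * X - X * hρ.sqrt)
  rw [RCLike.re_to_complex, ← two_mul_Iq hρ hX] at h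
  linarith

theorem Jq_nonneg (hρ : ρ.PosSemidef) {X : Matrix (Fin d) (Fin d) ℂ} (hX : X.IsHermitian) :
    0 ≤ Jq hρ X := by
  have h := re_trace_conjTranspose_mul_self_nonneg (hρ.sqrt * Xc ρ X + Xc ρ X * hρ.sqrt)
  rw [RCLike.re_to_complex, ← two_mul_Jq hρ hX] at h
  linarith

theorem norm_trace_mul_commutator_sq_le_Iq_mul_Jq (hρ : ρ.PosSemidef)
    {X Y : Matrix (Fin d) (Fin d) ℂ} (hX : X.IsHermitian) (hY : Y.IsHermitian) :
    ‖trace (ρ * (X * Y - Y * X))‖ ^ 2 ≤ 4 * (Iq hρ X * Jq hρ Y) := by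
  have h := norm_trace_mul_commutator_sq_le hρ.isHermitian_sqrt hX (Xc ρ Y)
  rw [commutator_Xc, hρ.sqrt_mul_self, RCLike.re_to_complex, RCLike.re_to_complex,
    ← two_mul_Iq hρ hX, ← two_mul_Jq hρ hY] at h
  linarith

end UncertaintyQuantities

theorem le_sqrt_mul_mul_sqrt_mul_of_le_four_mul {a b c e t : ℝ} (hab : 0 ≤ a * b) (ht : 0 ≤ t)
    (hae : t ≤ 4 * (a * e)) (hcb : t ≤ 4 * (c * b)) : 1 / 4 * t ≤ √(a * b) * √(c * e) := by
  rw [← Real.sqrt_mul hab, Real.le_sqrt (by positivity) (by nlinarith)]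
  nlinarith [mul_le_mul hae hcb ht (by linarith)]

theorem refined_uncertainty_general (d : ℕ) (ρ X Y : Matrix (Fin d) (Fin d) ℂ)
    (hρ : ρ.PosSemidef) (hX : X.IsHermitian) (hY : Y.IsHermitian) :
    Uq hρ X * Uq hρ Y ≥
      (1 / 4) * ‖Matrix.trace (ρ * (X * Y - Y * X))‖ ^ 2 := by
  have hXY := norm_trace_mul_commutator_sq_le_Iq_mul_Jq hρ hX hY
  have hYX := norm_trace_mul_commutator_sq_le_Iq_mul_Jq hρ hY hX
  rw [← neg_sub, mul_neg, trace_neg, norm_neg] at hYX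
  exact le_sqrt_mul_mul_sqrt_mul_of_le_four_mul (mul_nonneg (Iq_nonneg hρ hX) (Jq_nonneg hρ hX))
    (by positivity) hXY hYX

/-- Information-refined uncertainty relation:
U(ρ,X)·U(ρ,Y) ≥ (1/4)·|tr(ρ[X,Y])|². -/
theorem refined_uncertainty (d : ℕ) (hd : 1 ≤ d) (ρ X Y : Matrix (Fin d) (Fin d) ℂ)
    (hρ : ρ.PosSemidef) (hρtr : Matrix.trace ρ = 1)
    (hX : X.IsHermitian) (hY : Y.IsHermitian) :
    Uq hρ X * Uq hρ Y ≥
      (1 / 4) * ‖Matrix.trace (ρ * (X * Y - Y * X))‖ ^ 2 :=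
  refined_uncertainty_general d ρ X Y hρ hX hY
end

section
/- (Lemma 1 of the appendix) Assume N ≥ 3, let T be an N×N complex Hermitian matrix with T_{N−1,N−1} = 1, and let q ∈ ℂ and k, l ∈ ℝ satisfy the matrix equations J₊·T + k·(J₋·T) + l·(T·J₊) = (conj q)·T and T·J₋ + l·(J₋·T) + k·(T·J₊) = q·T. Then q·l = 0. -/
open Matrix

/-- Ladder coefficients c_a = √((N−1−a)(a+1)), so that c_{N−1} = 0. -/
noncomputable def spinC (N a : ℕ) : ℝ :=
  Real.sqrt (((N : ℝ) - 1 - a) * (a + 1))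

/-- Raising operator J₊: (J₊)_{a+1,a} = c_a, all other entries 0. -/
noncomputable def Jp (N : ℕ) : Matrix (Fin N) (Fin N) ℂ :=
  Matrix.of fun a b => if (a : ℕ) = (b : ℕ) + 1 then ((spinC N b : ℝ) : ℂ) else 0

/-- Lowering operator J₋ = J₊ᵀ. -/
noncomputable def Jm (N : ℕ) : Matrix (Fin N) (Fin N) ℂ := (Jp N)ᵀ

/-- J_z = diag(a − (N−1)/2). -/
noncomputable def Jz (N : ℕ) : Matrix (Fin N) (Fin N) ℂ :=
  Matrix.diagonal fun a => ((a : ℂ) - ((N : ℂ) - 1) / 2)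

/-- J_x = (J₊ + J₋)/2. -/
noncomputable def Jx (N : ℕ) : Matrix (Fin N) (Fin N) ℂ :=
  (1 / 2 : ℂ) • (Jp N + Jm N)

/-- J_y = (J₊ − J₋)/(2i). -/
noncomputable def Jy (N : ℕ) : Matrix (Fin N) (Fin N) ℂ :=
  (1 / (2 * Complex.I)) • (Jp N - Jm N)

lemma Jp_apply' {N : ℕ} (a b : Fin N) :
    Jp N a b = if (a : ℕ) = (b : ℕ) + 1 then ((spinC N b : ℝ) : ℂ) else 0 := rfl

lemma Jm_apply' {N : ℕ} (a b : Fin N) :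
    Jm N a b = if (b : ℕ) = (a : ℕ) + 1 then ((spinC N a : ℝ) : ℂ) else 0 := rfl

lemma Jp_mul_apply {N : ℕ} (T : Matrix (Fin N) (Fin N) ℂ) (a a' b : Fin N)
    (h : (a : ℕ) = (a' : ℕ) + 1) :
    (Jp N * T) a b = ((spinC N a' : ℝ) : ℂ) * T a' b := by
  rw [mul_apply, Finset.sum_eq_single a']
  · rw [Jp_apply', if_pos h]
  · intro c _ hc
    have : (a : ℕ) ≠ (c : ℕ) + 1 := fun h' => hc (Fin.ext (by omega))
    rw [Jp_apply', if_neg this, zero_mul]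
  · simp

lemma Jm_mul_apply {N : ℕ} (T : Matrix (Fin N) (Fin N) ℂ) (a a' b : Fin N)
    (h : (a' : ℕ) = (a : ℕ) + 1) :
    (Jm N * T) a b = ((spinC N a : ℝ) : ℂ) * T a' b := by
  rw [mul_apply, Finset.sum_eq_single a']
  · rw [Jm_apply', if_pos h]
  · intro c _ hc
    have : (c : ℕ) ≠ (a : ℕ) + 1 := fun h' => hc (Fin.ext (by omega))
    rw [Jm_apply', if_neg this, zero_mul]
  · simp

lemma Jm_mul_last {N : ℕ} (T : Matrix (Fin N) (Fin N) ℂ) (a b : Fin N)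
    (h : (a : ℕ) + 1 = N) :
    (Jm N * T) a b = 0 := by
  rw [mul_apply]
  apply Finset.sum_eq_zero
  intro c _
  have : (c : ℕ) ≠ (a : ℕ) + 1 := by have := c.isLt; omega
  rw [Jm_apply', if_neg this, zero_mul]

lemma mul_Jp_apply {N : ℕ} (T : Matrix (Fin N) (Fin N) ℂ) (a b b' : Fin N)
    (h : (b' : ℕ) = (b : ℕ) + 1) :
    (T * Jp N) a b = T a b' * ((spinC N b : ℝ) : ℂ) := by
  rw [mul_apply, Finset.sum_eq_single b']
  · rw [Jp_apply', if_pos h]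
  · intro c _ hc
    have : (c : ℕ) ≠ (b : ℕ) + 1 := fun h' => hc (Fin.ext (by omega))
    rw [Jp_apply', if_neg this, mul_zero]
  · simp

lemma mul_Jp_last {N : ℕ} (T : Matrix (Fin N) (Fin N) ℂ) (a b : Fin N)
    (h : (b : ℕ) + 1 = N) :
    (T * Jp N) a b = 0 := by
  rw [mul_apply]
  apply Finset.sum_eq_zero
  intro c _
  have : (c : ℕ) ≠ (b : ℕ) + 1 := by have := c.isLt; omega
  rw [Jp_apply', if_neg this, mul_zero]

lemma mul_Jm_apply {N : ℕ} (T : Matrix (Fin N) (Fin N) ℂ) (a b b' : Fin N)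
    (h : (b : ℕ) = (b' : ℕ) + 1) :
    (T * Jm N) a b = T a b' * ((spinC N b' : ℝ) : ℂ) := by
  rw [mul_apply, Finset.sum_eq_single b']
  · rw [Jm_apply', if_pos h]
  · intro c _ hc
    have : (b : ℕ) ≠ (c : ℕ) + 1 := fun h' => hc (Fin.ext (by omega))
    rw [Jm_apply', if_neg this, mul_zero]
  · simp

/-- Lemma 1: the parameters satisfy q·l = 0. -/
theorem lemma1_ql_eq_zero (N : ℕ) (hN : 3 ≤ N)
    (T : Matrix (Fin N) (Fin N) ℂ) (hT : T.IsHermitian)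
    (hT1 : T ⟨N - 1, by omega⟩ ⟨N - 1, by omega⟩ = 1)
    (q : ℂ) (k l : ℝ)
    (heq1 : Jp N * T + (k : ℂ) • (Jm N * T) + (l : ℂ) • (T * Jp N)
      = (starRingEnd ℂ q) • T)
    (heq2 : T * Jm N + (l : ℂ) • (Jm N * T) + (k : ℂ) • (T * Jp N) = q • T) :
    q * (l : ℂ) = 0 := by
  have hn1 : N - 1 < N := by omega
  have hn2 : N - 2 < N := by omega
  have hn3 : N - 3 < N := by omega
  set n : Fin N := ⟨N - 1, hn1⟩ with hn
  set p : Fin N := ⟨N - 2, hn2⟩ with hp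
  set r : Fin N := ⟨N - 3, hn3⟩ with hr
  have hnv : (n : ℕ) = N - 1 := rfl
  have hpv : (p : ℕ) = N - 2 := rfl
  have hrv : (r : ℕ) = N - 3 := rfl
  have hnp : (n : ℕ) = (p : ℕ) + 1 := by rw [hnv, hpv]; omega
  have hpr : (p : ℕ) = (r : ℕ) + 1 := by rw [hpv, hrv]; omega
  have hnN : (n : ℕ) + 1 = N := by rw [hnv]; omega
  have hTnn : T n n = 1 := hT1
  -- real computations of the squared coefficients
  have hN3 : (3 : ℝ) ≤ (N : ℝ) := by exact_mod_cast hN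
  have hcp : (((p : ℕ) : ℕ) : ℝ) = (N : ℝ) - 2 := by
    rw [hpv]; rw [Nat.cast_sub (by omega)]; norm_num
  have hcr : (((r : ℕ) : ℕ) : ℝ) = (N : ℝ) - 3 := by
    rw [hrv]; rw [Nat.cast_sub (by omega)]; norm_num
  have hαr : spinC N (p : ℕ) ^ 2 = (N : ℝ) - 1 := by
    rw [spinC, hcp, Real.sq_sqrt (by nlinarith)]; ring
  have hβr : spinC N (r : ℕ) ^ 2 = 2 * ((N : ℝ) - 2) := by
    rw [spinC, hcr, Real.sq_sqrt (by nlinarith)]; ring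
  have hαc : ((spinC N (p : ℕ) : ℝ) : ℂ) ^ 2 = (N : ℂ) - 1 := by
    rw [← Complex.ofReal_pow, hαr]; push_cast; ring
  have hβc : ((spinC N (r : ℕ) : ℝ) : ℂ) ^ 2 = 2 * ((N : ℂ) - 2) := by
    rw [← Complex.ofReal_pow, hβr]; push_cast; ring
  -- extract the six scalar equations
  have eA := congrFun (congrFun heq2 n) n
  simp only [Matrix.add_apply, Matrix.smul_apply, smul_eq_mul] at eA
  rw [mul_Jm_apply T n n p hnp, Jm_mul_last T n n hnN, mul_Jp_last T n n hnN, hTnn] at eA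
  have eB := congrFun (congrFun heq1 n) n
  simp only [Matrix.add_apply, Matrix.smul_apply, smul_eq_mul] at eB
  rw [Jp_mul_apply T n p n hnp, Jm_mul_last T n n hnN, mul_Jp_last T n n hnN, hTnn] at eB
  have eC := congrFun (congrFun heq2 p) n
  simp only [Matrix.add_apply, Matrix.smul_apply, smul_eq_mul] at eC
  rw [mul_Jm_apply T p n p hnp, Jm_mul_apply T p n n hnp, mul_Jp_last T p n hnN, hTnn] at eC
  have eD := congrFun (congrFun heq2 r) n
  simp only [Matrix.add_apply, Matrix.smul_apply, smul_eq_mul] at eD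
  rw [mul_Jm_apply T r n p hnp, Jm_mul_apply T r p n hpr, mul_Jp_last T r n hnN] at eD
  have eE := congrFun (congrFun heq1 p) p
  simp only [Matrix.add_apply, Matrix.smul_apply, smul_eq_mul] at eE
  rw [Jp_mul_apply T p r p hpr, Jm_mul_apply T p n p hnp, mul_Jp_apply T p p n hnp] at eE
  have eF := congrFun (congrFun heq1 p) n
  simp only [Matrix.add_apply, Matrix.smul_apply, smul_eq_mul] at eF
  rw [Jp_mul_apply T p r n hpr, Jm_mul_apply T p n n hnp, mul_Jp_last T p n hnN, hTnn] at eF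
  set α : ℂ := ((spinC N (p : ℕ) : ℝ) : ℂ)
  set β : ℂ := ((spinC N (r : ℕ) : ℝ) : ℂ)
  -- algebraic combination
  have h5 : (l : ℂ) * α ^ 2 * T p n + (starRingEnd ℂ q) * l * α - l * β ^ 2 * T p n = 0 := by
    linear_combination α * eE + (starRingEnd ℂ q) * eC - β * eD - (k : ℂ) * α * eA - q * eF
  have h6 : (2 : ℂ) * l * T p n = 0 := by
    linear_combination h5 + (l : ℂ) * α * eB - 2 * (l : ℂ) * T p n * hαc + (l : ℂ) * T p n * hβc
  have h7 : (starRingEnd ℂ q) * l = 0 := by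
    linear_combination (α / 2) * h6 - (l : ℂ) * eB
  calc q * (l : ℂ) = starRingEnd ℂ ((starRingEnd ℂ q) * l) := by
        simp [_root_.map_mul, Complex.conj_conj, Complex.conj_ofReal]
    _ = 0 := by rw [h7, map_zero]
end

section
/- (Purity lemma) Let N ≥ 1, let q ∈ ℂ and k ∈ ℝ, and let T be an N×N complex Hermitian matrix with T_{N−1,N−1} = 1 satisfying J₊·T = (conj q)·T − k·(J₋·T). Then for all indices a, b one has T_{a,b} = conj(T_{N−1,a}) · T_{N−1,b}; in particular T is a rank-one (pure-state) projection onto the vector with components T_{N−1,b}. -/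
open Matrix

/-
Row `a + 1` of `J₊ T = q̄ T − k J₋ T` reads `c_a T_a = q̄ T_{a+1} − k c_{a+1} T_{a+2}`, and `c_a ≠ 0`
for `a < N − 1`. So, going down from the last row, every row of `T` is a multiple of the last one,
`T_a = l_a T_{N−1}`. Evaluating at column `N − 1`, where `T_{N−1,N−1} = 1`, gives
`l_a = T_{a,N−1}`, which is `conj T_{N−1,a}` because `T` is Hermitian.
-/

theorem Matrix.IsHermitian.apply_eq_star_mul_of_row_mem_span {ι R : Type*} [Semiring R]
    [Star R] {T : Matrix ι ι R} (hT : T.IsHermitian) {i : ι} (hii : T i i = 1)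
    (hrow : ∀ a, T a ∈ Submodule.span R {T i}) (a b : ι) :
    T a b = star (T i a) * T i b := by
  obtain ⟨l, hl⟩ := Submodule.mem_span_singleton.mp (hrow a)
  have hl_eq : l = star (T i a) := by
    simpa [hii, ← hl] using (hT.apply a i).symm
  rw [← hl, hl_eq, Pi.smul_apply, smul_eq_mul]

theorem Matrix.mul_row_mem_of_rows_mem {ι R : Type*} [Fintype ι] [Semiring R]
    {A T : Matrix ι ι R} {S : Submodule R (ι → R)} {v : ι}
    (h : ∀ j, A v j ≠ 0 → T j ∈ S) : (A * T) v ∈ S := by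
  rw [mul_apply_eq_vecMul, vecMul_eq_sum]
  refine Submodule.sum_mem _ fun j _ => ?_
  by_cases hj : A v j = 0
  · simp [hj]
  · exact S.smul_mem _ (h j hj)

lemma spinC_pos {N a : ℕ} (h : a + 1 < N) : 0 < spinC N a := by
  have : (a : ℝ) + 1 < N := by exact_mod_cast h
  exact Real.sqrt_pos.2 (by nlinarith)

lemma Jp_mul_row_succ {n : ℕ} (T : Matrix (Fin (n + 1)) (Fin (n + 1)) ℂ) (i : Fin n) :
    (Jp (n + 1) * T) i.succ = (spinC (n + 1) i : ℂ) • T i.castSucc := by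
  ext b
  rw [mul_apply, Finset.sum_eq_single i.castSucc]
  · simp [Jp]
  · intro j _ hj
    have : (i : ℕ) ≠ j := fun h => hj (Fin.ext h.symm)
    simp [Jp, this]
  · simp

lemma lt_of_Jm_apply_ne_zero {N : ℕ} {v j : Fin N} (h : Jm N v j ≠ 0) : v < j := by
  by_contra hvj
  have : (j : ℕ) ≠ v + 1 := by omega
  simp [Jm, Jp, this] at h

theorem row_mem_span_last_of_Jp_mul_eq {n : ℕ} (T : Matrix (Fin (n + 1)) (Fin (n + 1)) ℂ)
    (α β : ℂ) (heq : Jp (n + 1) * T = α • T - β • (Jm (n + 1) * T)) (a : Fin (n + 1)) :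
    T a ∈ Submodule.span ℂ {T (Fin.last n)} := by
  set S := Submodule.span ℂ {T (Fin.last n)}
  suffices h : ∀ i : Fin (n + 1), ∀ j, i ≤ j → T j ∈ S from h a a le_rfl
  intro i
  induction i using Fin.reverseInduction with
  | last =>
    intro j hj
    rw [Fin.last_le_iff.mp hj]
    exact Submodule.mem_span_singleton_self _
  | cast i ih =>
    intro j hj
    rcases hj.lt_or_eq with hlt | rfl
    · exact ih j (Fin.castSucc_lt_iff_succ_le.mp hlt)
    have hc : (spinC (n + 1) i : ℂ) ≠ 0 :=
      Complex.ofReal_ne_zero.mpr (spinC_pos (by omega)).ne'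
    have hrow := Jp_mul_row_succ T i
    rw [heq] at hrow
    have hJm : (Jm (n + 1) * T) i.succ ∈ S :=
      mul_row_mem_of_rows_mem fun j hj => ih j (lt_of_Jm_apply_ne_zero hj).le
    have hcast : T i.castSucc =
        (spinC (n + 1) i : ℂ)⁻¹ • (α • T i.succ - β • (Jm (n + 1) * T) i.succ) := by
      rw [eq_inv_smul_iff₀ hc]
      exact hrow.symm
    rw [hcast]
    exact S.smul_mem _ (S.sub_mem (S.smul_mem _ (ih _ le_rfl)) (S.smul_mem _ hJm))

/-- Purity lemma: a Hermitian solution of J₊T = q̄T − k J₋T with T_{N−1,N−1} = 1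
has rank one: T_{a,b} = conj(T_{N−1,a})·T_{N−1,b}. -/
theorem purity_lemma (N : ℕ) (hN : 1 ≤ N) (q : ℂ) (k : ℝ)
    (T : Matrix (Fin N) (Fin N) ℂ) (hT : T.IsHermitian)
    (hT1 : T ⟨N - 1, by omega⟩ ⟨N - 1, by omega⟩ = 1)
    (heq : Jp N * T = (starRingEnd ℂ q) • T - (k : ℂ) • (Jm N * T)) :
    ∀ a b : Fin N,
      T a b = starRingEnd ℂ (T ⟨N - 1, by omega⟩ a) * T ⟨N - 1, by omega⟩ b := by
  obtain ⟨n, rfl⟩ : ∃ n, N = n + 1 := ⟨N - 1, by omega⟩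
  exact hT.apply_eq_star_mul_of_row_mem_span hT1
    (row_mem_span_last_of_Jp_mul_eq T _ _ heq)
end

section
/- Let d ≥ 1 be an integer (d = 2j), let s' ∈ ℝ, and let P be a polynomial in two variables x, y over ℂ whose degree in each of the two variables is at most d, satisfying the two partial differential equations d·(x−y)·P = (x² − s')·∂P/∂x − (y² − s')·∂P/∂y and d·(x+y)·P = (x² + s')·∂P/∂x + (y² + s')·∂P/∂y. Then there exists c ∈ ℂ such that P = c·(x·y + s')^d. (This is the Wick-symbol form of the mixed minimum uncertainty states under Condition 1, i.e. u' = v' = 0 and t' = −s'.) -/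
/-!
Adding and subtracting the two equations gives `d x P = x² ∂ₓP + s' ∂ᵧP` and
`d y P = y² ∂ᵧP + s' ∂ₓP`. For the coefficients `a m n` of `xᵐ yⁿ` these read
`(d - m) a m n = s' (n + 1) a (m+1) (n+1)` and `(d - n) a m n = s' (m + 1) a (m+1) (n+1)`.
Their difference gives `a m n = s' a (m+1) (n+1)` off the diagonal, so off-diagonal
coefficients vanish because those of degree `> d` in `x` do; on the diagonal, the first
recurrence run downwards from `a d d` produces the binomial expansion of `(xy + s')ᵈ`.
-/

open MvPolynomial Finsupp

theorem MvPolynomial.coeff_X_mul_pderiv {σ R : Type*} [CommSemiring R] (i : σ) (μ : σ →₀ ℕ)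
    (p : MvPolynomial σ R) : coeff μ (X i * pderiv i p) = μ i * coeff μ p := by
  classical
  rw [coeff_X_mul', coeff_pderiv]
  by_cases hi : μ i = 0
  · simp [hi]
  · have hi1 : 1 ≤ μ i := Nat.one_le_iff_ne_zero.mpr hi
    rw [if_pos (Finsupp.mem_support_iff.mpr hi), tsub_add_cancel_of_le (single_le_iff.mpr hi1),
      mul_comm, tsub_apply, single_eq_same, ← Nat.cast_add_one, Nat.sub_add_cancel hi1]

theorem mul_X_eq_of_wick_eqs {K : Type*} [Field K] [CharZero K] {d s : K}
    {P : MvPolynomial (Fin 2) K}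
    (heq1 : C d * (X 0 - X 1) * P =
      (X 0 ^ 2 - C s) * pderiv 0 P - (X 1 ^ 2 - C s) * pderiv 1 P)
    (heq2 : C d * (X 0 + X 1) * P =
      (X 0 ^ 2 + C s) * pderiv 0 P + (X 1 ^ 2 + C s) * pderiv 1 P) :
    C d * X 0 * P = X 0 ^ 2 * pderiv 0 P + C s * pderiv 1 P ∧
      C d * X 1 * P = X 1 ^ 2 * pderiv 1 P + C s * pderiv 0 P := by
  have two_ne : (2 : MvPolynomial (Fin 2) K) ≠ 0 := two_ne_zero
  exact ⟨mul_left_cancel₀ two_ne (by linear_combination heq1 + heq2),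
    mul_left_cancel₀ two_ne (by linear_combination heq2 - heq1)⟩

noncomputable def bideg (m n : ℕ) : Fin 2 →₀ ℕ := single 0 m + single 1 n

@[simp] theorem bideg_apply_zero (m n : ℕ) : bideg m n 0 = m := by simp [bideg]

@[simp] theorem bideg_apply_one (m n : ℕ) : bideg m n 1 = n := by simp [bideg]

theorem eq_bideg (μ : Fin 2 →₀ ℕ) : μ = bideg (μ 0) (μ 1) := by
  ext i; fin_cases i <;> simp

theorem bideg_injective {m n m' n' : ℕ} (h : bideg m n = bideg m' n') : m = m' ∧ n = n' :=
  ⟨by simpa using DFunLike.congr_fun h 0, by simpa using DFunLike.congr_fun h 1⟩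

theorem bideg_succ_left (m n : ℕ) : bideg (m + 1) n = single 0 1 + bideg m n := by
  ext i; fin_cases i <;> simp [add_comm]

theorem bideg_succ_right (m n : ℕ) : bideg m (n + 1) = single 1 1 + bideg m n := by
  ext i; fin_cases i <;> simp [add_comm]

theorem bideg_add_single_zero (m n : ℕ) : bideg m n + single 0 1 = bideg (m + 1) n := by
  rw [add_comm, bideg_succ_left]

theorem bideg_add_single_one (m n : ℕ) : bideg m n + single 1 1 = bideg m (n + 1) := by
  rw [add_comm, bideg_succ_right]

theorem coeff_bideg_eq_zero_of_degreeOf_lt {R : Type*} [CommSemiring R]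
    {P : MvPolynomial (Fin 2) R} {m : ℕ} (h : P.degreeOf 0 < m) (n : ℕ) :
    coeff (bideg m n) P = 0 :=
  MvPolynomial.notMem_support_iff.mp fun hmem ↦
    (monomial_le_degreeOf 0 hmem).not_gt (by simpa using h)

section Coefficients

variable {R : Type*} [CommRing R] {d s : R} {P : MvPolynomial (Fin 2) R}

theorem coeff_recurrence_of_eq_left
    (h : C d * X 0 * P = X 0 ^ 2 * pderiv 0 P + C s * pderiv 1 P) (m n : ℕ) :
    (d - m) * coeff (bideg m n) P = s * (n + 1) * coeff (bideg (m + 1) (n + 1)) P := by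
  have := congrArg (coeff (bideg (m + 1) n)) h
  rw [mul_assoc, coeff_C_mul, pow_two, mul_assoc, coeff_add, coeff_C_mul, coeff_pderiv,
    bideg_add_single_one, bideg_apply_one, bideg_succ_left, coeff_X_mul, coeff_X_mul,
    coeff_X_mul_pderiv, bideg_apply_zero] at this
  linear_combination this

theorem coeff_recurrence_of_eq_right
    (h : C d * X 1 * P = X 1 ^ 2 * pderiv 1 P + C s * pderiv 0 P) (m n : ℕ) :
    (d - n) * coeff (bideg m n) P = s * (m + 1) * coeff (bideg (m + 1) (n + 1)) P := by
  have := congrArg (coeff (bideg m (n + 1))) h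
  rw [mul_assoc, coeff_C_mul, pow_two, mul_assoc, coeff_add, coeff_C_mul, coeff_pderiv,
    bideg_add_single_zero, bideg_apply_zero, bideg_succ_right, coeff_X_mul, coeff_X_mul,
    coeff_X_mul_pderiv, bideg_apply_one] at this
  linear_combination this

end Coefficients

theorem X_zero_mul_X_one_add_C_pow {R : Type*} [CommSemiring R] (s : R) (d : ℕ) :
    (X 0 * X 1 + C s) ^ d =
      ∑ k ∈ Finset.range (d + 1), monomial (bideg k k) (d.choose k * s ^ (d - k)) := by
  rw [add_pow]
  refine Finset.sum_congr rfl fun k _ ↦ ?_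
  rw [mul_pow, X_pow_eq_monomial, X_pow_eq_monomial, monomial_mul, ← C_pow, ← map_natCast C,
    mul_assoc, ← C_mul, mul_comm, C_mul_monomial, bideg]
  simp [mul_comm]

theorem coeff_bideg_X_zero_mul_X_one_add_C_pow {R : Type*} [CommSemiring R] (s : R)
    (d m n : ℕ) : coeff (bideg m n) ((X 0 * X 1 + C s) ^ d) =
      if m = n ∧ m ≤ d then (d.choose m : R) * s ^ (d - m) else 0 := by
  rw [X_zero_mul_X_one_add_C_pow, coeff_sum]
  simp only [coeff_monomial]
  split_ifs with h
  · obtain ⟨rfl, hm⟩ := h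
    rw [Finset.sum_eq_single m]
    · simp
    · intro k _ hk; rw [if_neg fun h ↦ hk (bideg_injective h).1]
    · simp; omega
  · refine Finset.sum_eq_zero fun k hk ↦ if_neg fun he ↦ h ?_
    obtain ⟨rfl, rfl⟩ := bideg_injective he
    exact ⟨rfl, Nat.lt_succ_iff.mp (Finset.mem_range.mp hk)⟩

section Recurrence

variable {K : Type*} [Field K] [CharZero K] {a : ℕ → ℕ → K} {d : ℕ} {s : K}

theorem eq_zero_of_ne_of_recurrence
    (hA : ∀ m n, ((d : K) - m) * a m n = s * (n + 1) * a (m + 1) (n + 1))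
    (hB : ∀ m n, ((d : K) - n) * a m n = s * (m + 1) * a (m + 1) (n + 1))
    (hvanish : ∀ m n, d < m → a m n = 0) {m n : ℕ} (hmn : m ≠ n) : a m n = 0 := by
  have hshift : ∀ k, a (m + k) (n + k) = s * a (m + k + 1) (n + k + 1) := fun k ↦ by
    have hne : ((n + k : ℕ) : K) - (m + k : ℕ) ≠ 0 :=
      sub_ne_zero.mpr (Nat.cast_injective.ne (by omega))
    refine mul_left_cancel₀ hne ?_
    linear_combination hA (m + k) (n + k) - hB (m + k) (n + k)
  have hiter : ∀ k, a m n = s ^ k * a (m + k) (n + k) := by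
    intro k
    induction k with
    | zero => simp
    | succ k ih => rw [ih, hshift, pow_succ, mul_assoc]; rfl
  rw [hiter (d + 1), hvanish _ _ (by omega), mul_zero]

theorem diag_eq_of_recurrence
    (hA : ∀ m n, ((d : K) - m) * a m n = s * (n + 1) * a (m + 1) (n + 1))
    {k : ℕ} (hk : k ≤ d) : a k k = a d d * d.choose k * s ^ (d - k) := by
  induction hk using Nat.decreasingInduction with
  | self => simp
  | of_succ k hk ih =>
    obtain ⟨j, hj⟩ : ∃ j, d - k = j + 1 := ⟨d - k - 1, by omega⟩
    have hdk : (d : K) - k ≠ 0 := sub_ne_zero.mpr (Nat.cast_injective.ne (by omega))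
    have hchoose : (d.choose (k + 1) : K) * (k + 1) = d.choose k * (d - k) := by
      rw [← Nat.cast_sub hk.le]; exact_mod_cast Nat.choose_succ_right_eq d k
    refine mul_left_cancel₀ hdk ?_
    rw [hA, ih, hj, show d - (k + 1) = j by omega]
    linear_combination a d d * s ^ (j + 1) * hchoose

theorem eq_mul_choose_of_recurrence
    (hA : ∀ m n, ((d : K) - m) * a m n = s * (n + 1) * a (m + 1) (n + 1))
    (hB : ∀ m n, ((d : K) - n) * a m n = s * (m + 1) * a (m + 1) (n + 1))
    (hvanish : ∀ m n, d < m → a m n = 0) (m n : ℕ) :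
    a m n = a d d * if m = n ∧ m ≤ d then (d.choose m : K) * s ^ (d - m) else 0 := by
  by_cases hmn : m = n
  · subst hmn
    by_cases hmd : m ≤ d
    · rw [if_pos ⟨rfl, hmd⟩, diag_eq_of_recurrence hA hmd, mul_assoc]
    · rw [if_neg fun h ↦ hmd h.2, hvanish _ _ (by omega), mul_zero]
  · rw [if_neg fun h ↦ hmn h.1, eq_zero_of_ne_of_recurrence hA hB hvanish hmn, mul_zero]

end Recurrence

theorem wick_mixed_solution_general (d : ℕ) (s' : ℝ)
    (P : MvPolynomial (Fin 2) ℂ)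
    (hdeg0 : P.degreeOf 0 ≤ d)
    (heq1 : C (d : ℂ) * (X 0 - X 1) * P
      = (X 0 ^ 2 - C ((s' : ℝ) : ℂ)) * pderiv 0 P
        - (X 1 ^ 2 - C ((s' : ℝ) : ℂ)) * pderiv 1 P)
    (heq2 : C (d : ℂ) * (X 0 + X 1) * P
      = (X 0 ^ 2 + C ((s' : ℝ) : ℂ)) * pderiv 0 P
        + (X 1 ^ 2 + C ((s' : ℝ) : ℂ)) * pderiv 1 P) :
    ∃ c : ℂ, P = C c * (X 0 * X 1 + C ((s' : ℝ) : ℂ)) ^ d := by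
  obtain ⟨hx, hy⟩ := mul_X_eq_of_wick_eqs heq1 heq2
  refine ⟨coeff (bideg d d) P, MvPolynomial.ext _ _ fun μ ↦ ?_⟩
  rw [eq_bideg μ, coeff_C_mul, coeff_bideg_X_zero_mul_X_one_add_C_pow]
  exact eq_mul_choose_of_recurrence (a := fun m n ↦ coeff (bideg m n) P)
    (coeff_recurrence_of_eq_left hx) (coeff_recurrence_of_eq_right hy)
    (fun m n hm ↦ coeff_bideg_eq_zero_of_degreeOf_lt (hdeg0.trans_lt hm) n) _ _

/-- Wick-symbol form of the mixed minimum uncertainty states (Condition 1):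
a bivariate polynomial P of degree ≤ d in each variable satisfying
d(x−y)P = (x²−s')∂ₓP − (y²−s')∂ᵧP and d(x+y)P = (x²+s')∂ₓP + (y²+s')∂ᵧP
must be a multiple of (xy + s')^d. -/
theorem wick_mixed_solution (d : ℕ) (hd : 1 ≤ d) (s' : ℝ)
    (P : MvPolynomial (Fin 2) ℂ)
    (hdeg0 : P.degreeOf 0 ≤ d) (hdeg1 : P.degreeOf 1 ≤ d)
    (heq1 : C (d : ℂ) * (X 0 - X 1) * P
      = (X 0 ^ 2 - C ((s' : ℝ) : ℂ)) * pderiv 0 P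
        - (X 1 ^ 2 - C ((s' : ℝ) : ℂ)) * pderiv 1 P)
    (heq2 : C (d : ℂ) * (X 0 + X 1) * P
      = (X 0 ^ 2 + C ((s' : ℝ) : ℂ)) * pderiv 0 P
        + (X 1 ^ 2 + C ((s' : ℝ) : ℂ)) * pderiv 1 P) :
    ∃ c : ℂ, P = C c * (X 0 * X 1 + C ((s' : ℝ) : ℂ)) ^ d :=
  wick_mixed_solution_general d s' P hdeg0 heq1 heq2
end

section
/- Let d ∈ ℕ (d = 2j), let σ, v' ∈ ℝ with σ ≠ 0, and let f be a nonzero polynomial in one variable X over ℂ satisfying the differential equation 2·(X² − σ²)·f' = (2d·X − v')·f, where f' denotes the formal derivative. Then there exist a natural number p with p ≤ d and a nonzero constant c ∈ ℂ such that v' = 2σ·(2p − d) and f = c·(X + σ)^p·(X − σ)^{d−p}. (With σ = √s' and p = j + v'/(4√s'), this is the quantization condition and explicit pure-state Wick symbol under Condition 2, i.e. st = −1, u = 0.) -/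
open Polynomial

lemma wick_aux (σ : ℝ) : ∀ (d : ℕ) (v' : ℝ) (f : Polynomial ℂ), f ≠ 0 →
    (2 * (X ^ 2 - C ((σ : ℂ) ^ 2)) * derivative f
      = (C (2 * (d : ℂ)) * X - C ((v' : ℝ) : ℂ)) * f) →
    ∃ p : ℕ, p ≤ d ∧ v' = 2 * σ * (2 * (p : ℝ) - (d : ℝ)) ∧
      ∃ c : ℂ, c ≠ 0 ∧
        f = C c * (X + C ((σ : ℝ) : ℂ)) ^ p * (X - C ((σ : ℝ) : ℂ)) ^ (d - p) := by
  intro d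
  induction d with
  | zero =>
    intro v' f hf heq
    simp only [Nat.cast_zero, mul_zero, map_zero, zero_mul, zero_sub, neg_mul] at heq
    -- first show derivative f = 0
    have hd0 : derivative f = 0 := by
      by_contra hd
      have hfn : f.natDegree ≠ 0 := by
        intro h
        rw [eq_C_of_natDegree_eq_zero h] at hd
        simp at hd
      have h2 : (2 * (X ^ 2 - C ((σ : ℂ) ^ 2)) : Polynomial ℂ) ≠ 0 := by
        intro h
        have := congrArg (fun p => coeff p 2) h
        simp only [coeff_zero, mul_sub, coeff_sub, coeff_ofNat_mul, coeff_X_pow] at this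
        rw [coeff_C] at this
        norm_num at this
      have hdegL : (2 * (X ^ 2 - C ((σ : ℂ) ^ 2)) * derivative f).natDegree
          = 2 + (derivative f).natDegree := by
        rw [natDegree_mul h2 hd]
        congr 1
        compute_degree!
      have hlt : (derivative f).natDegree = f.natDegree - 1 :=
        natDegree_eq_of_degree_eq_some (degree_derivative_eq f (Nat.pos_of_ne_zero hfn))
      have hfn1 : 1 ≤ f.natDegree := Nat.pos_of_ne_zero hfn
      have hdegR : (-(C ((v' : ℝ) : ℂ) * f)).natDegree ≤ f.natDegree := by
        rw [natDegree_neg]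
        exact (natDegree_mul_le).trans (by simp)
      rw [heq] at hdegL
      omega
    obtain ⟨a, ha⟩ : ∃ a, C a = f := natDegree_eq_zero.mp (natDegree_eq_zero_of_derivative_eq_zero hd0)
    have ha0 : a ≠ 0 := fun h => hf (by rw [← ha, h, map_zero])
    rw [hd0, mul_zero, ← ha] at heq
    have hv : ((v' : ℝ) : ℂ) = 0 := by
      have := heq.symm
      rw [← map_mul, neg_eq_zero, C_eq_zero] at this
      exact (mul_eq_zero.mp this).resolve_right ha0
    refine ⟨0, le_refl 0, by simpa using (Complex.ofReal_eq_zero.mp hv), a, ha0, by simp [← ha]⟩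
  | succ d ih =>
    intro v' f hf heq
    have hB : (C (2 * (((d+1) : ℕ) : ℂ)) * X - C ((v' : ℝ) : ℂ)) ≠ 0 := by
      intro h2
      have := congrArg (fun p => coeff p 1) h2
      simp only [coeff_sub, coeff_C_mul, coeff_X_one, mul_one, coeff_C, coeff_zero] at this
      norm_num at this
      have h3 : (((d+1) : ℕ) : ℂ) = 0 := by push_cast; linear_combination this
      exact absurd (Nat.cast_eq_zero.mp h3) (by omega)
    have hd : derivative f ≠ 0 := by
      intro h
      rw [h, mul_zero] at heq
      exact hB ((mul_eq_zero.mp heq.symm).resolve_right hf)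
    have hfn : f.natDegree ≠ 0 := fun h => hd (by rw [eq_C_of_natDegree_eq_zero h]; simp)
    obtain ⟨r, hr⟩ := Complex.exists_root
      (natDegree_pos_iff_degree_pos.mp (Nat.pos_of_ne_zero hfn))
    have hA : (2 * (X ^ 2 - C ((σ : ℂ) ^ 2)) : Polynomial ℂ) ≠ 0 := by
      intro h
      have := congrArg (fun p => coeff p 2) h
      simp only [coeff_zero, mul_sub, coeff_sub, coeff_ofNat_mul, coeff_X_pow] at this
      rw [coeff_C] at this
      norm_num at this
    have hr2 : r ^ 2 = ((σ : ℝ) : ℂ) ^ 2 := by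
      by_contra hne
      have hq : ¬ IsRoot (2 * (X ^ 2 - C (((σ : ℝ) : ℂ) ^ 2))) r := by
        simp only [IsRoot, eval_mul, eval_ofNat, eval_sub, eval_pow, eval_X, eval_C,
          mul_eq_zero, sub_eq_zero]
        push_neg
        exact ⟨by norm_num, hne⟩
      have hq0 : rootMultiplicity r (2 * (X ^ 2 - C (((σ : ℝ) : ℂ) ^ 2))) = 0 :=
        rootMultiplicity_eq_zero hq
      have hm : 1 ≤ rootMultiplicity r f := (rootMultiplicity_pos hf).mpr hr
      have hderiv : rootMultiplicity r (derivative f) = rootMultiplicity r f - 1 :=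
        derivative_rootMultiplicity_of_root hr
      have hL := rootMultiplicity_mul (x := r) (mul_ne_zero hA hd)
      have hR := rootMultiplicity_mul (x := r) (mul_ne_zero hB hf)
      rw [heq, hR] at hL
      omega
    have hcase : r = ((σ : ℝ) : ℂ) ∨ r = -((σ : ℝ) : ℂ) := by
      have h0 : (r - ((σ : ℝ) : ℂ)) * (r + ((σ : ℝ) : ℂ)) = 0 := by linear_combination hr2
      rcases mul_eq_zero.mp h0 with h | h
      · exact Or.inl (by linear_combination h)
      · exact Or.inr (by linear_combination h)
    obtain ⟨g, hg⟩ := dvd_iff_isRoot.mpr hr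
    have hgne : g ≠ 0 := fun h => hf (by rw [hg, h, mul_zero])
    have hdf : derivative f = g + (X - C r) * derivative g := by
      rw [hg, derivative_mul]; simp
    rcases hcase with hcs | hcs
    · -- r = σ
      have key : 2 * (X ^ 2 - C ((σ : ℂ) ^ 2)) * derivative g
          = (C (2 * (d : ℂ)) * X - C (((v' + 2*σ : ℝ) : ℝ) : ℂ)) * g := by
        apply mul_left_cancel₀ (X_sub_C_ne_zero ((σ : ℝ) : ℂ))
        rw [hdf, hg, hcs] at heq
        push_cast at heq ⊢
        simp only [map_add, map_mul, map_sub, map_ofNat, map_one, map_pow] at heq ⊢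
        linear_combination heq
      obtain ⟨p, hp, hv, c, hc, hfc⟩ := ih (v' + 2*σ) g hgne key
      refine ⟨p, hp.trans (Nat.le_succ d), by push_cast at hv ⊢; linarith, c, hc, ?_⟩
      rw [hg, hfc, hcs]
      have hdp : d + 1 - p = (d - p) + 1 := by omega
      rw [hdp]; ring
    · -- r = -σ
      have key : 2 * (X ^ 2 - C ((σ : ℂ) ^ 2)) * derivative g
          = (C (2 * (d : ℂ)) * X - C (((v' - 2*σ : ℝ) : ℝ) : ℂ)) * g := by
        apply mul_left_cancel₀ (X_sub_C_ne_zero (-((σ : ℝ) : ℂ)))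
        rw [hdf, hg, hcs] at heq
        push_cast at heq ⊢
        simp only [map_add, map_mul, map_sub, map_neg, map_ofNat, map_one, map_pow] at heq ⊢
        linear_combination heq
      obtain ⟨p, hp, hv, c, hc, hfc⟩ := ih (v' - 2*σ) g hgne key
      refine ⟨p + 1, by omega, by push_cast at hv ⊢; linarith, c, hc, ?_⟩
      rw [hg, hfc, hcs]
      have hdp : d + 1 - (p + 1) = d - p := by omega
      rw [hdp, map_neg, sub_neg_eq_add]; ring


/-- Quantization condition and explicit pure-state Wick symbol (Condition 2):
a nonzero polynomial f over ℂ with 2(X²−σ²)f' = (2dX − v')f must have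
v' = 2σ(2p−d) for some natural p ≤ d and f = c(X+σ)^p (X−σ)^{d−p}. -/
theorem wick_pure_solution (d : ℕ) (σ v' : ℝ) (hσ : σ ≠ 0)
    (f : Polynomial ℂ) (hf : f ≠ 0)
    (heq : 2 * (X ^ 2 - C ((σ : ℂ) ^ 2)) * derivative f
      = (C (2 * (d : ℂ)) * X - C ((v' : ℝ) : ℂ)) * f) :
    ∃ p : ℕ, p ≤ d ∧ v' = 2 * σ * (2 * (p : ℝ) - (d : ℝ)) ∧
      ∃ c : ℂ, c ≠ 0 ∧
        f = C c * (X + C ((σ : ℝ) : ℂ)) ^ p * (X - C ((σ : ℝ) : ℂ)) ^ (d - p) :=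
  wick_aux σ d v' f hf heq
end
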